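/- arXiv:2203.17099 — 2 statements merged into one kernel-verified Lean document; each statement's English description precedes it below -/
import Mathlib

section
/- Let H be a Hermitian matrix indexed by pairs (x,s), x ∈ {0,…,n−1} a site and s ∈ {A,B}, which is short range with parameters d > 0, K_d > 0. Let f : ℝ → ℂ be bounded and continuous with sup norm ‖f‖∞ = sup_{x∈ℝ}|f(x)|, and suppose there is a measurable g : ℝ → ℂ such that f(x) = (2π)⁻¹·∫_ℝ g(ω)·e^{iωx} dω for every x ∈ ℝ (the integral being absolutely convergent), and constants C_β, β > 0 with |g(ω)·ω| ≤ C_β·e^{−β|ω|} for all ω ∈ ℝ. Then for all sites x, y: ‖(f(H))_{x,y}‖ ≤ 4·(‖f‖∞ + C_β·K_d/β + C_β·|x−y|/d)·e^{−|x−y|/d'}, where d' = d·max(1, K_d/β) and f(H) is defined by functional calculus. -/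
open MeasureTheory
open scoped ComplexOrder

noncomputable section

namespace Chiral

/-- The ℓ²-operator norm of a square complex matrix. -/
def opNorm {n : Type*} [Fintype n] [DecidableEq n] (T : Matrix n n ℂ) : ℝ :=
  ‖Matrix.toEuclideanCLM (𝕜 := ℂ) T‖

/-- The trace norm `Tr √(T*T)` of a square complex matrix. -/
def traceNorm {n : Type*} [Fintype n] [DecidableEq n] (T : Matrix n n ℂ) : ℝ :=
  (((Matrix.posSemidef_conjTranspose_mul_self T).1.eigenvectorUnitary : Matrix n n ℂ) *
    Matrix.diagonal (fun i => ((√((Matrix.posSemidef_conjTranspose_mul_self T).1.eigenvalues i) : ℝ) : ℂ)) *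
    (star (Matrix.posSemidef_conjTranspose_mul_self T).1.eigenvectorUnitary : Matrix n n ℂ)).trace.re

open Classical in
/-- Functional calculus of a Hermitian matrix: same eigenvectors, eigenvalue `E`
replaced by `f E`.  (Junk value `0` if the matrix is not Hermitian.) -/
def matFun {n : Type*} [Fintype n] [DecidableEq n] (f : ℝ → ℂ) (H : Matrix n n ℂ) :
    Matrix n n ℂ :=
  if hH : H.IsHermitian then
    (hH.eigenvectorUnitary : Matrix n n ℂ) *
      Matrix.diagonal (fun i => f (hH.eigenvalues i)) *
      star (hH.eigenvectorUnitary : Matrix n n ℂ)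
  else 0

/-- The matrix exponential. -/
def matExp {n : Type*} [Fintype n] [DecidableEq n] (M : Matrix n n ℂ) : Matrix n n ℂ :=
  NormedSpace.exp M

/-- `S = tanh (H/δ)` by functional calculus. -/
def tanhOf {n : Type*} [Fintype n] [DecidableEq n] (δ : ℝ) (H : Matrix n n ℂ) :
    Matrix n n ℂ :=
  matFun (fun E => (Real.tanh (E / δ) : ℂ)) H

/-- Index set of the finite chain of length `L` with two internal degrees of freedom. -/
abbrev Site (L : ℕ) := Fin L × Fin 2

/-- The `2×2` block of a matrix on the chain corresponding to sites `x, y`. -/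
def matBlock {L : ℕ} (T : Matrix (Site L) (Site L) ℂ) (x y : Fin L) :
    Matrix (Fin 2) (Fin 2) ℂ :=
  Matrix.of fun s s' => T (x, s) (y, s')

/-- A finite Hamiltonian is short range with parameters `d`, `K`. -/
def FinShortRange {L : ℕ} (H : Matrix (Site L) (Site L) ℂ) (d K : ℝ) : Prop :=
  ∀ x : Fin L, ∑ y : Fin L,
    opNorm (matBlock H x y) * Real.exp (|((x : ℕ) : ℝ) - ((y : ℕ) : ℝ)| / d) ≤ K

/-- The chiral operator `C` on the finite chain: `+1` on the `A` component,
`-1` on the `B` component. -/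
def chiralC (L : ℕ) : Matrix (Site L) (Site L) ℂ :=
  Matrix.diagonal fun p => if p.2 = 0 then 1 else -1

/-- The diagonal matrix `θ(X)` associated to a switch function `θ`. -/
def switchX {L : ℕ} (θ : Fin L → ℝ) : Matrix (Site L) (Site L) ℂ :=
  Matrix.diagonal fun p => (θ p.1 : ℂ)

/-- The standard switch function: `1` on the left half (`x < L/2`), `0` on the right half. -/
def midSwitch (L : ℕ) : Fin L → ℝ := fun x => if ((x : ℕ) : ℝ) < (L : ℝ) / 2 then 1 else 0

/-- The edge index `Tr (C θ(X) (1 - S²))`. -/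
def edgeIndex {L : ℕ} (θ : Fin L → ℝ) (S : Matrix (Site L) (Site L) ℂ) : ℂ :=
  Matrix.trace (chiralC L * switchX θ * (1 - S * S))

/-- The bulk index `½ Tr (C S [θ(X), S])`. -/
def bulkIndex {L : ℕ} (θ : Fin L → ℝ) (S : Matrix (Site L) (Site L) ℂ) : ℂ :=
  (1 / 2 : ℂ) * Matrix.trace (chiralC L * S * (switchX θ * S - S * switchX θ))

/-- The bulk Hilbert space `ℓ²(ℤ; ℂ²)`. -/
abbrev BulkSpace := lp (fun _ : ℤ => EuclideanSpace ℂ (Fin 2)) 2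

/-- Bounded operators on the bulk Hilbert space. -/
abbrev BulkOp := BulkSpace →L[ℂ] BulkSpace

/-- The canonical basis vector at site `x` with internal index `s`. -/
def bvec (x : ℤ) (s : Fin 2) : BulkSpace := lp.single 2 x (EuclideanSpace.single s 1)

/-- The `2×2` block `T_{x,y}` of a bulk operator. -/
def bulkBlock (T : BulkOp) (x y : ℤ) : Matrix (Fin 2) (Fin 2) ℂ :=
  Matrix.of fun s s' => (inner ℂ (bvec x s) (T (bvec y s')) : ℂ)

/-- A bulk Hamiltonian is short range with parameters `d`, `K`:
`sup_x ∑_y ‖T_{x,y}‖ e^{|x-y|/d} ≤ K`. -/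
def BulkShortRange (T : BulkOp) (d K : ℝ) : Prop :=
  ∀ x : ℤ,
    Summable (fun y : ℤ => opNorm (bulkBlock T x y) * Real.exp (|((x : ℝ)) - ((y : ℝ))| / d)) ∧
    ∑' y : ℤ, opNorm (bulkBlock T x y) * Real.exp (|((x : ℝ)) - ((y : ℝ))| / d) ≤ K

/-- The spectrum of `T` does not meet the open interval `(-Δ, Δ)`. -/
def HasGap (T : BulkOp) (Δ : ℝ) : Prop :=
  ∀ r : ℝ, |r| < Δ → (r : ℂ) ∉ spectrum ℂ T

/-- The on-site chiral matrix `diag(1, -1)`. -/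
def c2 : Matrix (Fin 2) (Fin 2) ℂ := Matrix.diagonal fun s => if s = 0 then 1 else -1

/-- A bulk operator is chiral: it anticommutes with the bulk chiral operator
(expressed blockwise, which is equivalent). -/
def ChiralBulk (T : BulkOp) : Prop :=
  ∀ x y : ℤ, c2 * bulkBlock T x y + bulkBlock T x y * c2 = 0

/-- The restriction `ι* T ι` of a bulk operator to the finite open chain of length `L`. -/
def restrict (L : ℕ) (T : BulkOp) : Matrix (Site L) (Site L) ℂ :=
  Matrix.of fun p q => bulkBlock T ((p.1 : ℕ) : ℤ) ((q.1 : ℕ) : ℤ) p.2 q.2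

/-! Write `f(H) = (2π)⁻¹ ∫ g(ω) e^{iωH} dω`. The entries of the unitary `e^{iωH}` are bounded
by `1`, and since `‖(Hᵏ)_{x,y}‖ ≤ Kᵏ e^{-|x-y|/d}`, the exponential series bounds the
off-diagonal blocks of `e^{iωH}` by `(e^{|ω|K} - 1) e^{-|x-y|/d}`. Split the frequency integral at
`|ω| = T` with `βT = |x-y|/d'`: for `|ω| ≤ T` the decay of `g(ω) ω` beats the growth `e^{|ω|K}`,
and for `|ω| > T` it gives `|g(ω)| ≤ Cβ e^{-β|ω|}/T`, each part contributing `O(e^{-βT})`.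
When `e^{-|x-y|/d'} ≥ 1/2` the trivial bound `|f(H)_{p,q}| ≤ ‖f‖∞` suffices; otherwise
`|x-y| > d/2`, which is what makes the factor `1/(βT)` of the outer part harmless. -/

open scoped Matrix.Norms.L2Operator

section OperatorNorm

variable {m : Type*} [Fintype m] [DecidableEq m]

theorem opNorm_eq_norm (A : Matrix m m ℂ) : opNorm A = ‖A‖ := rfl

theorem norm_apply_le_opNorm (A : Matrix m m ℂ) (i j : m) : ‖A i j‖ ≤ opNorm A := by
  have h : A i j = inner ℂ (EuclideanSpace.single i (1 : ℂ))
      (Matrix.toEuclideanCLM (𝕜 := ℂ) A (EuclideanSpace.single j 1)) := by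
    simp [EuclideanSpace.inner_single_left, Matrix.ofLp_toEuclideanCLM, Matrix.mulVec_single]
  rw [h]
  calc _ ≤ _ := norm_inner_le_norm _ _
    _ ≤ _ := mul_le_mul_of_nonneg_left
        ((Matrix.toEuclideanCLM (𝕜 := ℂ) A).le_opNorm _) (norm_nonneg _)
    _ = opNorm A := by simp [opNorm]

theorem opNorm_le_card_mul_of_norm_apply_le {A : Matrix m m ℂ} {c : ℝ} (hc : 0 ≤ c)
    (h : ∀ i j, ‖A i j‖ ≤ c) : opNorm A ≤ Fintype.card m * c := by
  refine ContinuousLinearMap.opNorm_le_bound _ (by positivity) fun v => ?_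
  have hrow : ∀ i, ‖(Matrix.toEuclideanCLM (𝕜 := ℂ) A v) i‖ ^ 2 ≤
      Fintype.card m * c ^ 2 * ‖v‖ ^ 2 := by
    intro i
    calc ‖(Matrix.toEuclideanCLM (𝕜 := ℂ) A v) i‖ ^ 2 ≤ (∑ j, ‖A i j‖ * ‖v j‖) ^ 2 := by
          rw [Matrix.ofLp_toEuclideanCLM]
          gcongr
          exact (norm_sum_le _ _).trans_eq (by simp)
      _ ≤ (∑ j, ‖A i j‖ ^ 2) * ∑ j, ‖v j‖ ^ 2 := Finset.sum_mul_sq_le_sq_mul_sq _ _ _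
      _ ≤ (∑ _j : m, c ^ 2) * ‖v‖ ^ 2 := by
          rw [EuclideanSpace.norm_sq_eq]
          gcongr with j
          exact h i j
      _ = Fintype.card m * c ^ 2 * ‖v‖ ^ 2 := by simp
  refine (sq_le_sq₀ (norm_nonneg _) (by positivity)).mp ?_
  calc ‖Matrix.toEuclideanCLM (𝕜 := ℂ) A v‖ ^ 2
      ≤ ∑ _i : m, Fintype.card m * c ^ 2 * ‖v‖ ^ 2 := by
        rw [EuclideanSpace.norm_sq_eq]
        exact Finset.sum_le_sum fun i _ => hrow i
    _ = (Fintype.card m * c * ‖v‖) ^ 2 := by simp; ring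

theorem exp_apply_eq_tsum (A : Matrix m m ℂ) (p q : m) :
    NormedSpace.exp A p q = ∑' k : ℕ, (k.factorial : ℂ)⁻¹ * (A ^ k) p q := by
  have hs : Summable fun k : ℕ => ((k.factorial : ℂ)⁻¹ • A ^ k : m → m → ℂ) :=
    NormedSpace.expSeries_summable' (𝕂 := ℂ) A
  rw [congrFun (NormedSpace.exp_eq_tsum ℂ) A]
  exact (congrFun (tsum_apply hs) q).trans (tsum_apply (Pi.summable.mp hs p))

end OperatorNorm

section FunctionalCalculus

variable {m : Type*} [Fintype m] [DecidableEq m] {H : Matrix m m ℂ}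

theorem matFun_apply (hH : H.IsHermitian) (f : ℝ → ℂ) (p q : m) :
    matFun f H p q = ∑ i, (hH.eigenvectorUnitary : Matrix m m ℂ) p i * f (hH.eigenvalues i) *
      star ((hH.eigenvectorUnitary : Matrix m m ℂ) q i) := by
  rw [matFun, dif_pos hH, Matrix.mul_apply]
  simp [Matrix.mul_diagonal]

theorem opNorm_matFun_le (hH : H.IsHermitian) {f : ℝ → ℂ} {c : ℝ} (hc : 0 ≤ c)
    (h : ∀ i, ‖f (hH.eigenvalues i)‖ ≤ c) : opNorm (matFun f H) ≤ c := by
  rw [opNorm_eq_norm, matFun, dif_pos hH, ← Unitary.coe_star, CStarRing.norm_mul_coe_unitary,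
    CStarRing.norm_coe_unitary_mul, Matrix.l2_opNorm_diagonal]
  exact (pi_norm_le_iff_of_nonneg hc).mpr h

theorem norm_matFun_exp_apply_le_one (hH : H.IsHermitian) (ω : ℝ) (p q : m) :
    ‖matFun (fun u => Complex.exp (Complex.I * ω * u)) H p q‖ ≤ 1 :=
  (norm_apply_le_opNorm _ p q).trans <| opNorm_matFun_le hH zero_le_one fun i => by
    rw [Complex.norm_exp]; simp

theorem matFun_exp_mul_eq_exp_smul (hH : H.IsHermitian) (c : ℂ) :
    matFun (fun u => Complex.exp (c * u)) H = NormedSpace.exp (c • H) := by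
  set U : Matrix m m ℂ := (hH.eigenvectorUnitary : Matrix m m ℂ)
  have hinv : U⁻¹ = star U :=
    Matrix.inv_eq_left_inv (Unitary.star_mul_self_of_mem hH.eigenvectorUnitary.2)
  have hconj : c • H = U * Matrix.diagonal (fun i => c * (hH.eigenvalues i : ℂ)) * U⁻¹ := by
    conv_lhs => rw [hH.spectral_theorem]
    rw [hinv, Unitary.conjStarAlgAut_apply, ← smul_mul_assoc, ← mul_smul_comm,
      ← Matrix.diagonal_smul]
    rfl
  rw [hconj, Matrix.exp_conj _ _ Unitary.isUnit_coe, Matrix.exp_diagonal, hinv,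
    matFun, dif_pos hH, Complex.exp_eq_exp_ℂ, Pi.exp_def]

theorem mul_matFun_exp_apply_eq_sum (hH : H.IsHermitian) (g : ℝ → ℂ) (p q : m) (ω : ℝ) :
    g ω * matFun (fun u => Complex.exp (Complex.I * ω * u)) H p q =
      ∑ i, (hH.eigenvectorUnitary : Matrix m m ℂ) p i *
        (g ω * Complex.exp (Complex.I * ω * hH.eigenvalues i)) *
        star ((hH.eigenvectorUnitary : Matrix m m ℂ) q i) := by
  rw [matFun_apply hH, Finset.mul_sum]
  exact Finset.sum_congr rfl fun i _ => by ring

theorem integrable_mul_matFun_exp_apply (hH : H.IsHermitian) {g : ℝ → ℂ}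
    (hg : ∀ x : ℝ, Integrable (fun ω : ℝ => g ω * Complex.exp (Complex.I * ω * x))) (p q : m) :
    Integrable fun ω : ℝ => g ω * matFun (fun u => Complex.exp (Complex.I * ω * u)) H p q := by
  simp_rw [mul_matFun_exp_apply_eq_sum hH]
  exact integrable_finsetSum _ fun i _ => ((hg _).const_mul _).mul_const _

theorem matFun_apply_eq_integral (hH : H.IsHermitian) {f g : ℝ → ℂ}
    (hg : ∀ x : ℝ, Integrable (fun ω : ℝ => g ω * Complex.exp (Complex.I * ω * x)))
    (hf : ∀ x : ℝ,
      f x = ((2 * Real.pi : ℝ) : ℂ)⁻¹ * ∫ ω : ℝ, g ω * Complex.exp (Complex.I * ω * x))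
    (p q : m) :
    matFun f H p q = ((2 * Real.pi : ℝ) : ℂ)⁻¹ *
      ∫ ω : ℝ, g ω * matFun (fun u => Complex.exp (Complex.I * ω * u)) H p q := by
  simp_rw [mul_matFun_exp_apply_eq_sum hH, matFun_apply hH, hf]
  rw [integral_finsetSum _ fun i _ => ((hg _).const_mul _).mul_const _, Finset.mul_sum]
  refine Finset.sum_congr rfl fun i _ => ?_
  rw [integral_mul_const, integral_const_mul]
  ring

end FunctionalCalculus

section ShortRange

variable {L : ℕ}

theorem matBlock_mul (A B : Matrix (Site L) (Site L) ℂ) (x y : Fin L) :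
    matBlock (A * B) x y = ∑ z, matBlock A x z * matBlock B z y := by
  ext s s'
  simp [matBlock, Matrix.mul_apply, Matrix.sum_apply, Fintype.sum_prod_type]

theorem matBlock_one (x y : Fin L) :
    matBlock (1 : Matrix (Site L) (Site L) ℂ) x y = if x = y then 1 else 0 := by
  ext s s'
  by_cases h : x = y <;> simp [matBlock, Matrix.one_apply, h]

theorem FinShortRange.smul {H : Matrix (Site L) (Site L) ℂ} {d K : ℝ}
    (hH : FinShortRange H d K) (c : ℂ) : FinShortRange (c • H) d (‖c‖ * K) := by
  intro x
  have hblock : ∀ y, matBlock (c • H) x y = c • matBlock H x y := fun y => rfl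
  simp only [hblock, opNorm_eq_norm, norm_smul, mul_assoc, ← Finset.mul_sum]
  exact mul_le_mul_of_nonneg_left (hH x) (norm_nonneg c)

theorem FinShortRange.opNorm_matBlock_pow_le {H : Matrix (Site L) (Site L) ℂ} {d K : ℝ}
    (hH : FinShortRange H d K) (hd : 0 < d) (hK : 0 ≤ K) (k : ℕ) (x y : Fin L) :
    opNorm (matBlock (H ^ k) x y) ≤ K ^ k * Real.exp (-|((x : ℕ) : ℝ) - ((y : ℕ) : ℝ)| / d) := by
  induction k generalizing x y with
  | zero =>
    rw [pow_zero, pow_zero, one_mul, matBlock_one]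
    split_ifs with h
    · subst h; simp [opNorm_eq_norm]
    · simpa [opNorm_eq_norm] using (Real.exp_pos _).le
  | succ k ih =>
    have htri : ∀ z : Fin L, Real.exp (-|((z : ℕ) : ℝ) - ((y : ℕ) : ℝ)| / d) ≤
        Real.exp (|((x : ℕ) : ℝ) - ((z : ℕ) : ℝ)| / d) *
          Real.exp (-|((x : ℕ) : ℝ) - ((y : ℕ) : ℝ)| / d) := by
      intro z
      rw [← Real.exp_add, Real.exp_le_exp, ← add_div, div_le_div_iff_of_pos_right hd]
      linarith [abs_sub_le ((x : ℕ) : ℝ) ((z : ℕ) : ℝ) ((y : ℕ) : ℝ)]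
    calc opNorm (matBlock (H ^ (k + 1)) x y)
        ≤ ∑ z, opNorm (matBlock H x z) * opNorm (matBlock (H ^ k) z y) := by
          rw [pow_succ', matBlock_mul]
          exact (norm_sum_le _ _).trans
            (Finset.sum_le_sum fun z _ => norm_mul_le (matBlock H x z) _)
      _ ≤ ∑ z, opNorm (matBlock H x z) * Real.exp (|((x : ℕ) : ℝ) - ((z : ℕ) : ℝ)| / d) *
            (K ^ k * Real.exp (-|((x : ℕ) : ℝ) - ((y : ℕ) : ℝ)| / d)) := by
          refine Finset.sum_le_sum fun z _ => ?_
          calc opNorm (matBlock H x z) * opNorm (matBlock (H ^ k) z y)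
              ≤ opNorm (matBlock H x z) *
                  (K ^ k * (Real.exp (|((x : ℕ) : ℝ) - ((z : ℕ) : ℝ)| / d) *
                    Real.exp (-|((x : ℕ) : ℝ) - ((y : ℕ) : ℝ)| / d))) :=
                mul_le_mul_of_nonneg_left ((ih z y).trans
                  (mul_le_mul_of_nonneg_left (htri z) (pow_nonneg hK k))) (norm_nonneg _)
            _ = _ := by ring
      _ ≤ K * (K ^ k * Real.exp (-|((x : ℕ) : ℝ) - ((y : ℕ) : ℝ)| / d)) := by
          rw [← Finset.sum_mul]
          gcongr
          exact hH x
      _ = _ := by ring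

theorem tsum_pow_succ_div_factorial (t : ℝ) :
    ∑' k : ℕ, t ^ (k + 1) / (k + 1).factorial = Real.exp t - 1 := by
  have h := (Real.summable_pow_div_factorial t).tsum_eq_zero_add
  rw [Real.exp_eq_exp_ℝ, congrFun NormedSpace.exp_eq_tsum_div t, h]
  simp

theorem FinShortRange.norm_exp_apply_le {A : Matrix (Site L) (Site L) ℂ} {d K : ℝ}
    (hA : FinShortRange A d K) (hd : 0 < d) (hK : 0 ≤ K) {x y : Fin L} (hxy : x ≠ y)
    (s s' : Fin 2) :
    ‖NormedSpace.exp A (x, s) (y, s')‖ ≤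
      (Real.exp K - 1) * Real.exp (-|((x : ℕ) : ℝ) - ((y : ℕ) : ℝ)| / d) := by
  set D := Real.exp (-|((x : ℕ) : ℝ) - ((y : ℕ) : ℝ)| / d)
  set F : ℕ → ℂ := fun k => (k.factorial : ℂ)⁻¹ * (A ^ k) (x, s) (y, s')
  have hF : ∀ k, ‖F k‖ ≤ K ^ k / k.factorial * D := by
    intro k
    have hpow := (norm_apply_le_opNorm (matBlock (A ^ k) x y) s s').trans
      (hA.opNorm_matBlock_pow_le hd hK k x y)
    calc ‖F k‖ = (k.factorial : ℝ)⁻¹ * ‖(A ^ k) (x, s) (y, s')‖ := by simp [F]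
      _ ≤ (k.factorial : ℝ)⁻¹ * (K ^ k * D) := by gcongr; exact hpow
      _ = K ^ k / k.factorial * D := by ring
  have hF0 : F 0 = 0 := by simp [F, hxy]
  have hsum : Summable fun k => ‖F k‖ :=
    .of_nonneg_of_le (fun _ => norm_nonneg _) hF ((Real.summable_pow_div_factorial K).mul_right D)
  calc ‖NormedSpace.exp A (x, s) (y, s')‖ = ‖∑' k, F (k + 1)‖ := by
        rw [exp_apply_eq_tsum, hsum.of_norm.tsum_eq_zero_add, hF0, zero_add]
    _ ≤ ∑' k, K ^ (k + 1) / (k + 1).factorial * D :=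
        tsum_of_norm_bounded (((summable_nat_add_iff 1).mpr
          (Real.summable_pow_div_factorial K)).mul_right D).hasSum fun k => hF (k + 1)
    _ = (Real.exp K - 1) * D := by rw [tsum_mul_right, tsum_pow_succ_div_factorial]

theorem norm_matFun_exp_apply_le {H : Matrix (Site L) (Site L) ℂ} (hH : H.IsHermitian)
    {d K : ℝ} (hd : 0 < d) (hK : 0 ≤ K) (hsr : FinShortRange H d K) {x y : Fin L} (hxy : x ≠ y)
    (s s' : Fin 2) (ω : ℝ) :
    ‖matFun (fun u => Complex.exp (Complex.I * ω * u)) H (x, s) (y, s')‖ ≤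
      (Real.exp (|ω| * K) - 1) * Real.exp (-|((x : ℕ) : ℝ) - ((y : ℕ) : ℝ)| / d) := by
  rw [matFun_exp_mul_eq_exp_smul hH]
  simpa using (hsr.smul (Complex.I * ω)).norm_exp_apply_le hd (by positivity) hxy s s'

end ShortRange

section FrequencyIntegral

open Set

theorem setIntegral_exp_neg_mul_abs_of_lt_abs {β : ℝ} (hβ : 0 < β) {T : ℝ} (hT : 0 ≤ T) :
    ∫ ω in {ω : ℝ | T < |ω|}, Real.exp (-β * |ω|) = 2 * Real.exp (-β * T) / β := by
  have hset : {ω : ℝ | T < |ω|} = abs ⁻¹' Ioi T := rfl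
  have hcomp : ∀ ω : ℝ, (abs ⁻¹' Ioi T).indicator (fun ω => Real.exp (-β * |ω|)) ω =
      (Ioi T).indicator (fun u => Real.exp (-β * u)) |ω| :=
    fun _ => indicator_comp_right (f := abs) (g := fun u => Real.exp (-β * u))
  rw [hset, ← integral_indicator (measurableSet_Ioi.preimage continuous_abs.measurable),
    funext hcomp, integral_comp_abs (f := (Ioi T).indicator fun u => Real.exp (-β * u)),
    setIntegral_indicator measurableSet_Ioi, inter_eq_right.mpr (Ioi_subset_Ioi hT),
    integral_exp_mul_Ioi (neg_lt_zero.mpr hβ)]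
  field_simp


theorem norm_integral_le_of_norm_le_of_norm_le_exp {φ : ℝ → ℂ} (hφ : Integrable φ)
    {T A B β : ℝ} (hT : 0 ≤ T) (hβ : 0 < β) (hin : ∀ ω, |ω| ≤ T → ‖φ ω‖ ≤ A)
    (hout : ∀ ω, T < |ω| → ‖φ ω‖ ≤ B * Real.exp (-β * |ω|)) :
    ‖∫ ω, φ ω‖ ≤ A * (2 * T) + B * (2 * Real.exp (-β * T) / β) := by
  set S : Set ℝ := {ω | T < |ω|}
  have hS : MeasurableSet S := measurableSet_lt measurable_const continuous_abs.measurable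
  have hSc : Sᶜ = Icc (-T) T := by ext ω; simp [S, abs_le]
  have hexp : IntegrableOn (fun ω => Real.exp (-β * |ω|)) S :=
    .of_integral_ne_zero (by rw [setIntegral_exp_neg_mul_abs_of_lt_abs hβ hT]; positivity)
  have hinner : ‖∫ ω in Sᶜ, φ ω‖ ≤ A * (2 * T) := by
    rw [hSc]
    have := norm_setIntegral_le_of_norm_le_const (s := Icc (-T) T)
      (Real.volume_Icc ▸ ENNReal.ofReal_lt_top) fun ω hω => hin ω (abs_le.mpr hω)
    rwa [Real.volume_real_Icc_of_le (by linarith), show T - -T = 2 * T by ring] at this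
  have houter : ‖∫ ω in S, φ ω‖ ≤ B * (2 * Real.exp (-β * T) / β) :=
    calc ‖∫ ω in S, φ ω‖ ≤ ∫ ω in S, ‖φ ω‖ := norm_integral_le_integral_norm _
      _ ≤ ∫ ω in S, B * Real.exp (-β * |ω|) :=
          setIntegral_mono_on hφ.norm.integrableOn (hexp.const_mul B) hS hout
      _ = _ := by rw [integral_const_mul, setIntegral_exp_neg_mul_abs_of_lt_abs hβ hT]
  rw [← integral_add_compl hS hφ, add_comm]
  exact (norm_add_le _ _).trans (add_le_add hinner houter)

theorem exp_sub_one_le_mul_exp (t : ℝ) : Real.exp t - 1 ≤ t * Real.exp t := by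
  have h := mul_le_mul_of_nonneg_right (Real.add_one_le_exp (-t)) (Real.exp_pos t).le
  rw [← Real.exp_add, neg_add_cancel, Real.exp_zero] at h
  linarith

theorem norm_mul_le_mul_exp_of_decay {g ψ : ℝ → ℂ} {C β K ρ : ℝ} (hK : 0 ≤ K)
    (hg : ∀ ω : ℝ, ‖g ω * ω‖ ≤ C * Real.exp (-β * |ω|))
    (hψ : ∀ ω, ‖ψ ω‖ ≤ (Real.exp (|ω| * K) - 1) * Real.exp (-ρ)) (ω : ℝ) :
    ‖g ω * ψ ω‖ ≤ C * K * Real.exp ((K - β) * |ω| - ρ) :=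
  calc ‖g ω * ψ ω‖ ≤ ‖g ω‖ * (|ω| * K * Real.exp (|ω| * K) * Real.exp (-ρ)) := by
        rw [norm_mul]
        gcongr
        exact (hψ ω).trans (by gcongr; linarith [exp_sub_one_le_mul_exp (|ω| * K)])
    _ = ‖g ω * ω‖ * K * Real.exp (|ω| * K - ρ) := by
        rw [Real.exp_sub, Real.exp_neg, norm_mul, Complex.norm_real, Real.norm_eq_abs]
        field_simp
    _ ≤ C * Real.exp (-β * |ω|) * K * Real.exp (|ω| * K - ρ) := by gcongr; exact hg ω
    _ = C * K * Real.exp ((K - β) * |ω| - ρ) := by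
        rw [show (K - β) * |ω| - ρ = -β * |ω| + (|ω| * K - ρ) by ring, Real.exp_add]; ring

theorem norm_integral_mul_le_of_decay {g ψ : ℝ → ℂ} (hint : Integrable fun ω => g ω * ψ ω)
    {C β K ρ : ℝ} (hβ : 0 < β) (hK : 0 ≤ K) (hρ : 1 / 2 ≤ ρ)
    (hg : ∀ ω : ℝ, ‖g ω * ω‖ ≤ C * Real.exp (-β * |ω|))
    (hψ_le_one : ∀ ω, ‖ψ ω‖ ≤ 1)
    (hψ_decay : ∀ ω, ‖ψ ω‖ ≤ (Real.exp (|ω| * K) - 1) * Real.exp (-ρ)) :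
    ‖∫ ω, g ω * ψ ω‖ ≤ 2 * C * (ρ + 2 * (K / β) + 2) * Real.exp (-(ρ / max 1 (K / β))) := by
  set κ := max 1 (K / β)
  have hκ1 : 1 ≤ κ := le_max_left _ _
  have hKκ : K ≤ β * κ := by
    have := le_max_right 1 (K / β); rwa [div_le_iff₀' hβ] at this
  have hκK : κ ≤ 1 + K / β := max_le (by linarith [div_nonneg hK hβ.le]) (by linarith)
  have hC : 0 ≤ C := by simpa using hg 0
  set T := ρ / (β * κ)
  have hT : 0 < T := by positivity
  have hβκT : β * κ * T = ρ := by simp only [T]; field_simp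
  have hβT : β * T = ρ / κ := by
    rw [eq_div_iff (by positivity)]; linarith [hβκT]
  have hinner : ∀ ω : ℝ, |ω| ≤ T → ‖g ω * ψ ω‖ ≤ C * K * Real.exp (-(β * T)) := by
    intro ω hω
    refine (norm_mul_le_mul_exp_of_decay hK hg hψ_decay ω).trans ?_
    gcongr
    nlinarith [abs_nonneg ω, mul_le_mul_of_nonneg_left hω (by nlinarith : 0 ≤ β * κ - β)]
  have houter : ∀ ω : ℝ, T < |ω| → ‖g ω * ψ ω‖ ≤ C / T * Real.exp (-β * |ω|) := by
    intro ω hω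
    rw [norm_mul, div_mul_eq_mul_div, le_div_iff₀ hT]
    calc ‖g ω‖ * ‖ψ ω‖ * T ≤ ‖g ω‖ * 1 * |ω| := by gcongr; exact hψ_le_one ω
      _ ≤ C * Real.exp (-β * |ω|) := by simpa using hg ω
  have hsplit := norm_integral_le_of_norm_le_of_norm_le_exp hint hT.le hβ hinner houter
  have hKT : K * T ≤ ρ := by rw [← hβκT]; gcongr
  have hinvT : 1 / (β * T) ≤ 2 + 2 * (K / β) := by
    rw [hβT, one_div_div, div_le_iff₀ (by linarith)]
    nlinarith
  rw [neg_mul, hβT] at hsplit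
  calc _ ≤ _ := hsplit
    _ = 2 * C * (K * T + 1 / (β * T)) * Real.exp (-(ρ / κ)) := by field_simp
    _ ≤ 2 * C * (ρ + 2 * (K / β) + 2) * Real.exp (-(ρ / κ)) :=
        mul_le_mul_of_nonneg_right (mul_le_mul_of_nonneg_left (by linarith) (by positivity))
          (Real.exp_pos _).le

end FrequencyIntegral

theorem norm_matFun_apply_le_of_far {L : ℕ} {H : Matrix (Site L) (Site L) ℂ}
    (hH : H.IsHermitian) {d K : ℝ} (hd : 0 < d) (hK : 0 ≤ K) (hsr : FinShortRange H d K)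
    {f g : ℝ → ℂ}
    (hg_int : ∀ x : ℝ, Integrable (fun ω : ℝ => g ω * Complex.exp (Complex.I * ω * x)))
    (hrep : ∀ x : ℝ,
      f x = ((2 * Real.pi : ℝ) : ℂ)⁻¹ * ∫ ω : ℝ, g ω * Complex.exp (Complex.I * ω * x))
    {C β : ℝ} (hβ : 0 < β) (hg_decay : ∀ ω : ℝ, ‖g ω * ω‖ ≤ C * Real.exp (-β * |ω|))
    {x y : Fin L} (hfar : 1 / 2 ≤ |((x : ℕ) : ℝ) - ((y : ℕ) : ℝ)| / d) (s s' : Fin 2) :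
    ‖matFun f H (x, s) (y, s')‖ ≤
      2 * (C * (K / β) + C * (|((x : ℕ) : ℝ) - ((y : ℕ) : ℝ)| / d)) *
        Real.exp (-(|((x : ℕ) : ℝ) - ((y : ℕ) : ℝ)| / d / max 1 (K / β))) := by
  set ρ := |((x : ℕ) : ℝ) - ((y : ℕ) : ℝ)| / d
  have hxy : x ≠ y := by rintro rfl; simp [ρ] at hfar; linarith
  have hC : 0 ≤ C := by simpa using hg_decay 0
  have hint := norm_integral_mul_le_of_decay (integrable_mul_matFun_exp_apply hH hg_int _ _)
    hβ hK hfar hg_decay (norm_matFun_exp_apply_le_one hH · _ _)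
    (fun ω => (norm_matFun_exp_apply_le hH hd hK hsr hxy s s' ω).trans_eq (by rw [neg_div]))
  rw [matFun_apply_eq_integral hH hg_int hrep, norm_mul, norm_inv, Complex.norm_real,
    Real.norm_of_nonneg (by positivity)]
  refine (mul_le_mul_of_nonneg_left hint (by positivity)).trans ?_
  have hπ : (2 * Real.pi)⁻¹ * (2 * C) ≤ C / 3 := by
    rw [inv_mul_le_iff₀ (by positivity)]; nlinarith [Real.pi_gt_three]
  have hsum : C / 3 * (ρ + 2 * (K / β) + 2) ≤ 2 * (C * (K / β) + C * ρ) := by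
    nlinarith [mul_nonneg hC (div_nonneg hK hβ.le), mul_le_mul_of_nonneg_left hfar hC]
  calc (2 * Real.pi)⁻¹ * (2 * C * (ρ + 2 * (K / β) + 2) * Real.exp (-(ρ / max 1 (K / β))))
      = (2 * Real.pi)⁻¹ * (2 * C) * (ρ + 2 * (K / β) + 2) * Real.exp (-(ρ / max 1 (K / β))) := by
        ring
    _ ≤ C / 3 * (ρ + 2 * (K / β) + 2) * Real.exp (-(ρ / max 1 (K / β))) := by
        gcongr
    _ ≤ _ := by gcongr

theorem stmt4_general {n : ℕ}
    (H : Matrix (Site n) (Site n) ℂ) (hH : H.IsHermitian)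
    (d Kd : ℝ) (hd : 0 < d) (hKd : 0 < Kd) (hsr : FinShortRange H d Kd)
    (f : ℝ → ℂ)
    (hf_bdd : BddAbove (Set.range fun t : ℝ => ‖f t‖))
    (g : ℝ → ℂ)
    (hg_int : ∀ x : ℝ, Integrable (fun ω : ℝ => g ω * Complex.exp (Complex.I * ω * x)))
    (hrep : ∀ x : ℝ,
      f x = ((2 * Real.pi : ℝ) : ℂ)⁻¹ * ∫ ω : ℝ, g ω * Complex.exp (Complex.I * ω * x))
    (Cβ β : ℝ) (hβ : 0 < β)
    (hg_decay : ∀ ω : ℝ, ‖g ω * ω‖ ≤ Cβ * Real.exp (-β * |ω|)) :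
    ∀ x y : Fin n,
      opNorm (matBlock (matFun f H) x y) ≤
        4 * ((⨆ t : ℝ, ‖f t‖) + Cβ * Kd / β +
              Cβ * |((x : ℕ) : ℝ) - ((y : ℕ) : ℝ)| / d) *
          Real.exp (-|((x : ℕ) : ℝ) - ((y : ℕ) : ℝ)| / (d * max 1 (Kd / β))) := by
  intro x y
  set M := ⨆ t : ℝ, ‖f t‖
  have hM : ∀ t, ‖f t‖ ≤ M := le_ciSup hf_bdd
  have hM0 : 0 ≤ M := (norm_nonneg _).trans (hM 0)
  have hCβ : 0 ≤ Cβ := by simpa using hg_decay 0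
  set ρ := |((x : ℕ) : ℝ) - ((y : ℕ) : ℝ)| / d
  set κ := max 1 (Kd / β)
  set E := Real.exp (-(ρ / κ))
  rw [mul_div_assoc, mul_div_assoc, neg_div, div_mul_eq_div_div]
  refine (opNorm_le_card_mul_of_norm_apply_le (c := 2 * (M + Cβ * (Kd / β) + Cβ * ρ) * E)
    (by positivity) fun s s' => ?_).trans_eq (by simp; ring)
  by_cases hE : 1 / 2 ≤ E
  · calc ‖matFun f H (x, s) (y, s')‖ ≤ M :=
          (norm_apply_le_opNorm _ _ _).trans (opNorm_matFun_le hH hM0 fun _ => hM _)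
      _ ≤ 2 * (M + Cβ * (Kd / β) + Cβ * ρ) * E := by
          have : 0 ≤ Cβ * (Kd / β) + Cβ * ρ := by positivity
          nlinarith
  · rw [not_le] at hE
    have hfar : 1 / 2 ≤ ρ := by
      have := Real.add_one_le_exp (-(ρ / κ))
      have := div_le_self (show 0 ≤ ρ by positivity) (le_max_left 1 (Kd / β))
      linarith
    refine (norm_matFun_apply_le_of_far hH hd hKd.le hsr hg_int hrep hβ hg_decay hfar s s').trans ?_
    gcongr
    linarith

theorem stmt4 {n : ℕ}
    (H : Matrix (Site n) (Site n) ℂ) (hH : H.IsHermitian)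
    (d Kd : ℝ) (hd : 0 < d) (hKd : 0 < Kd) (hsr : FinShortRange H d Kd)
    (f : ℝ → ℂ) (hf_cont : Continuous f)
    (hf_bdd : BddAbove (Set.range fun t : ℝ => ‖f t‖))
    (g : ℝ → ℂ) (hg_meas : Measurable g)
    (hg_int : ∀ x : ℝ, Integrable (fun ω : ℝ => g ω * Complex.exp (Complex.I * ω * x)))
    (hrep : ∀ x : ℝ,
      f x = ((2 * Real.pi : ℝ) : ℂ)⁻¹ * ∫ ω : ℝ, g ω * Complex.exp (Complex.I * ω * x))
    (Cβ β : ℝ) (hCβ : 0 < Cβ) (hβ : 0 < β)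
    (hg_decay : ∀ ω : ℝ, ‖g ω * ω‖ ≤ Cβ * Real.exp (-β * |ω|)) :
    ∀ x y : Fin n,
      opNorm (matBlock (matFun f H) x y) ≤
        4 * ((⨆ t : ℝ, ‖f t‖) + Cβ * Kd / β +
              Cβ * |((x : ℕ) : ℝ) - ((y : ℕ) : ℝ)| / d) *
          Real.exp (-|((x : ℕ) : ℝ) - ((y : ℕ) : ℝ)| / (d * max 1 (Kd / β))) :=
  stmt4_general H hH d Kd hd hKd hsr f hf_bdd g hg_int hrep Cβ β hβ hg_decay

end Chiral

end
end

section
/- Let H be a Hermitian matrix indexed by pairs (x,s), x ∈ {0,…,n−1} a site and s ∈ {A,B}, which is short range with parameters d > 0, K_d > 0. Fix a site z ∈ {0,…,n−1} and let M_z be the invertible diagonal matrix acting on both internal components of site x by multiplication by e^{|x−z|/d}. Then the ℓ²-operator norm satisfies ‖M_z·H·M_z^{−1} − H‖ ≤ K_d. -/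
open MeasureTheory
open scoped ComplexOrder

noncomputable section

/-! Conjugating by `e^{f(X)}` multiplies the block `H_{x,y}` by `e^{f(x)-f(y)}`, so the blocks of
`M H M⁻¹ - H` are bounded by `(e^{|x-y|/d} - 1) ‖H_{x,y}‖`, since `x ↦ |x-z|/d` is
`1/d`-Lipschitz. These bounds have row sums at most `K_d`, and, `H` being Hermitian, the same
column sums; the Schur test (Cauchy–Schwarz on each block row) then bounds the operator norm. -/

open Matrix
open scoped Matrix.Norms.L2Operator

theorem sum_sq_sum_mul_le_of_row_col_sum_le {ι : Type*} [Fintype ι] (a : ι → ι → ℝ) (ha : ∀ x y, 0 ≤ a x y)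
    {K : ℝ} (hK : 0 ≤ K) (hrow : ∀ x, ∑ y, a x y ≤ K) (hcol : ∀ y, ∑ x, a x y ≤ K)
    (w : ι → ℝ) :
    ∑ x, (∑ y, a x y * w y) ^ 2 ≤ K ^ 2 * ∑ y, w y ^ 2 := by
  have hrow_sq (x : ι) : (∑ y, a x y * w y) ^ 2 ≤ K * ∑ y, a x y * w y ^ 2 := by
    calc (∑ y, a x y * w y) ^ 2 ≤ (∑ y, a x y) * ∑ y, a x y * w y ^ 2 :=
          Finset.sum_sq_le_sum_mul_sum_of_sq_le_mul _ (fun y _ => ha x y)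
            (fun y _ => mul_nonneg (ha x y) (sq_nonneg _)) (fun y _ => le_of_eq (by ring))
      _ ≤ K * ∑ y, a x y * w y ^ 2 := by
          gcongr
          · exact Finset.sum_nonneg fun y _ => mul_nonneg (ha x y) (sq_nonneg _)
          · exact hrow x
  calc ∑ x, (∑ y, a x y * w y) ^ 2 ≤ ∑ x, K * ∑ y, a x y * w y ^ 2 :=
        Finset.sum_le_sum fun x _ => hrow_sq x
    _ = K * ∑ y, (∑ x, a x y) * w y ^ 2 := by
        simp only [← Finset.mul_sum, Finset.sum_mul]
        rw [Finset.sum_comm]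
    _ ≤ K * ∑ y, K * w y ^ 2 := by
        gcongr with y
        exact hcol y
    _ = K ^ 2 * ∑ y, w y ^ 2 := by rw [← Finset.mul_sum]; ring

theorem EuclideanSpace.norm_sq_eq_sum_prod {𝕜 : Type*} [RCLike 𝕜] {ι κ : Type*} [Fintype ι]
    [Fintype κ] (v : EuclideanSpace 𝕜 (ι × κ)) :
    ‖v‖ ^ 2 = ∑ x, ‖(WithLp.toLp 2 fun s => v (x, s) : EuclideanSpace 𝕜 κ)‖ ^ 2 := by
  simp only [EuclideanSpace.norm_sq_eq, Fintype.sum_prod_type]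

theorem Real.abs_exp_sub_one_le_exp_abs_sub_one (t : ℝ) : |exp t - 1| ≤ exp |t| - 1 := by
  rcases le_or_gt 0 t with ht | ht
  · rw [abs_of_nonneg ht, abs_of_nonneg (sub_nonneg.2 (one_le_exp ht))]
  · rw [abs_of_neg ht, abs_of_nonpos (sub_nonpos.2 (exp_le_one_iff.2 ht.le))]
    nlinarith [add_one_le_exp t, add_one_le_exp (-t)]

namespace Matrix

section Blocks

variable {𝕜 : Type*} [RCLike 𝕜] {ι κ : Type*} [Fintype ι] [Fintype κ]

theorem mulVec_prod_apply (T : Matrix (ι × κ) (ι × κ) 𝕜) (v : ι × κ → 𝕜) (x : ι) :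
    (fun s => (T *ᵥ v) (x, s)) =
      ∑ y, (of fun s s' => T (x, s) (y, s')) *ᵥ fun s' => v (y, s') := by
  ext s
  simp only [mulVec, dotProduct, Fintype.sum_prod_type, Finset.sum_apply, of_apply]

theorem l2_opNorm_le_of_block_le [DecidableEq ι] [DecidableEq κ] (T : Matrix (ι × κ) (ι × κ) 𝕜)
    (a : ι → ι → ℝ) (hTa : ∀ x y, ‖(of fun s s' => T (x, s) (y, s') : Matrix κ κ 𝕜)‖ ≤ a x y)
    (ha : ∀ x y, 0 ≤ a x y) {K : ℝ} (hK : 0 ≤ K) (hrow : ∀ x, ∑ y, a x y ≤ K)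
    (hcol : ∀ y, ∑ x, a x y ≤ K) :
    ‖T‖ ≤ K := by
  rw [← l2_opNorm_toEuclideanCLM]
  refine ContinuousLinearMap.opNorm_le_bound _ hK fun v => ?_
  set w : ι → ℝ := fun y => ‖(WithLp.toLp 2 fun s => v (y, s) : EuclideanSpace 𝕜 κ)‖
  have hblock (x : ι) :
      ‖(WithLp.toLp 2 fun s => toEuclideanCLM (𝕜 := 𝕜) T v (x, s) : EuclideanSpace 𝕜 κ)‖ ≤
        ∑ y, a x y * w y := by
    have hsplit : (WithLp.toLp 2 fun s => toEuclideanCLM (𝕜 := 𝕜) T v (x, s) :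
          EuclideanSpace 𝕜 κ) =
        ∑ y, (EuclideanSpace.equiv κ 𝕜).symm
          ((of fun s s' => T (x, s) (y, s')) *ᵥ fun s => v (y, s)) := by
      rw [← WithLp.toLp_sum]
      exact congrArg (WithLp.toLp 2) (mulVec_prod_apply T v x)
    rw [hsplit]
    refine (norm_sum_le _ _).trans (Finset.sum_le_sum fun y _ => ?_)
    exact (l2_opNorm_mulVec _ (WithLp.toLp 2 fun s => v (y, s))).trans
      (mul_le_mul_of_nonneg_right (hTa x y) (norm_nonneg _))
  refine (sq_le_sq₀ (norm_nonneg _) (by positivity)).mp ?_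
  calc ‖toEuclideanCLM (𝕜 := 𝕜) T v‖ ^ 2
      = ∑ x, ‖(WithLp.toLp 2 fun s => toEuclideanCLM (𝕜 := 𝕜) T v (x, s) :
          EuclideanSpace 𝕜 κ)‖ ^ 2 := EuclideanSpace.norm_sq_eq_sum_prod _
    _ ≤ ∑ x, (∑ y, a x y * w y) ^ 2 := by gcongr with x; exact hblock x
    _ ≤ K ^ 2 * ∑ y, w y ^ 2 := sum_sq_sum_mul_le_of_row_col_sum_le a ha hK hrow hcol w
    _ = (K * ‖v‖) ^ 2 := by rw [mul_pow, EuclideanSpace.norm_sq_eq_sum_prod v]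

end Blocks

variable {m : Type*} [Fintype m] [DecidableEq m]

theorem diagonal_exp_mul_mul_diagonal_exp_neg_sub_apply (f : m → ℝ) (H : Matrix m m ℂ)
    (p q : m) :
    (diagonal (fun p => (Real.exp (f p) : ℂ)) * H * diagonal (fun p => (Real.exp (-f p) : ℂ)) -
        H) p q = ((Real.exp (f p - f q) - 1 : ℝ) : ℂ) * H p q := by
  simp only [sub_apply, mul_diagonal, diagonal_mul, sub_eq_add_neg, Real.exp_add]
  push_cast
  ring

variable {ι κ : Type*} [Fintype κ] [DecidableEq κ]

theorem IsHermitian.l2_opNorm_block_comm {H : Matrix (ι × κ) (ι × κ) ℂ} (hH : H.IsHermitian)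
    (x y : ι) :
    ‖(of fun s s' => H (x, s) (y, s') : Matrix κ κ ℂ)‖ =
      ‖(of fun s s' => H (y, s) (x, s') : Matrix κ κ ℂ)‖ := by
  rw [← l2_opNorm_conjTranspose (of fun s s' => H (y, s) (x, s'))]
  congr 1
  ext s s'
  exact (hH.apply (x, s) (y, s')).symm

variable [Fintype ι] [DecidableEq ι]

theorem IsHermitian.l2_opNorm_diagonal_exp_conj_sub_le {H : Matrix (ι × κ) (ι × κ) ℂ}
    (hH : H.IsHermitian) (f : ι → ℝ) (ρ : ι → ι → ℝ) (hf : ∀ x y, |f x - f y| ≤ ρ x y)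
    {K : ℝ} (hK : 0 ≤ K)
    (hH_decay : ∀ x, ∑ y, ‖(of fun s s' => H (x, s) (y, s') : Matrix κ κ ℂ)‖ *
      Real.exp (ρ x y) ≤ K) :
    ‖diagonal (fun p => (Real.exp (f p.1) : ℂ)) * H * diagonal (fun p => (Real.exp (-f p.1) : ℂ)) -
        H‖ ≤ K := by
  set h : ι → ι → ℝ := fun x y => ‖(of fun s s' => H (x, s) (y, s') : Matrix κ κ ℂ)‖
  -- Bounding by `|f x - f y|` rather than `ρ x y` makes the Schur weights symmetric.
  set a : ι → ι → ℝ := fun x y => (Real.exp |f x - f y| - 1) * h x y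
  have ha_nonneg (x y : ι) : 0 ≤ a x y :=
    mul_nonneg (sub_nonneg.2 (Real.one_le_exp (abs_nonneg _))) (norm_nonneg _)
  have ha_comm (x y : ι) : a x y = a y x := by
    simp only [a, h, abs_sub_comm (f x), hH.l2_opNorm_block_comm x y]
  have hrow (x : ι) : ∑ y, a x y ≤ K := by
    have hh (y : ι) : 0 ≤ h x y := norm_nonneg _
    calc ∑ y, a x y ≤ ∑ y, (Real.exp (ρ x y) - 1) * h x y :=
          Finset.sum_le_sum fun y _ => mul_le_mul_of_nonneg_right
            (sub_le_sub_right (Real.exp_le_exp.2 (hf x y)) 1) (hh y)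
      _ = ∑ y, h x y * Real.exp (ρ x y) - ∑ y, h x y := by
          rw [← Finset.sum_sub_distrib]
          exact Finset.sum_congr rfl fun y _ => by ring
      _ ≤ K := by linarith [hH_decay x, Finset.sum_nonneg fun y (_ : y ∈ Finset.univ) => hh y]
  refine l2_opNorm_le_of_block_le _ a (fun x y => ?_) ha_nonneg hK hrow
    fun y => (Finset.sum_congr rfl fun x _ => ha_comm x y).trans_le (hrow y)
  have hblock : (of fun s s' => (diagonal (fun p : ι × κ => (Real.exp (f p.1) : ℂ)) * H *
      diagonal (fun p : ι × κ => (Real.exp (-f p.1) : ℂ)) - H) (x, s) (y, s') : Matrix κ κ ℂ) =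
      ((Real.exp (f x - f y) - 1 : ℝ) : ℂ) • of fun s s' => H (x, s) (y, s') := by
    ext s s'
    rw [of_apply, smul_apply, of_apply, smul_eq_mul]
    exact diagonal_exp_mul_mul_diagonal_exp_neg_sub_apply (fun p : ι × κ => f p.1) H _ _
  rw [hblock, norm_smul, Complex.norm_real, Real.norm_eq_abs]
  exact mul_le_mul_of_nonneg_right (Real.abs_exp_sub_one_le_exp_abs_sub_one _) (norm_nonneg _)

end Matrix

namespace Chiral

theorem stmt13 {n : ℕ} (H : Matrix (Site n) (Site n) ℂ) (hH : H.IsHermitian)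
    (d Kd : ℝ) (hd : 0 < d) (hKd : 0 < Kd) (hsr : FinShortRange H d Kd) (z : Fin n) :
    opNorm
        (Matrix.diagonal
            (fun p : Site n => (Real.exp (|((p.1 : ℕ) : ℝ) - ((z : ℕ) : ℝ)| / d) : ℂ)) *
          H *
          Matrix.diagonal
            (fun p : Site n => (Real.exp (-(|((p.1 : ℕ) : ℝ) - ((z : ℕ) : ℝ)| / d)) : ℂ)) -
          H) ≤ Kd := by
  refine hH.l2_opNorm_diagonal_exp_conj_sub_le (fun x => |((x : ℕ) : ℝ) - ((z : ℕ) : ℝ)| / d)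
    (fun x y => |((x : ℕ) : ℝ) - ((y : ℕ) : ℝ)| / d) (fun x y => ?_) hKd.le hsr
  rw [← sub_div, abs_div, abs_of_pos hd]
  refine div_le_div_of_nonneg_right ?_ hd.le
  simpa only [sub_sub_sub_cancel_right] using abs_abs_sub_abs_le_abs_sub
    (((x : ℕ) : ℝ) - (z : ℕ)) (((y : ℕ) : ℝ) - (z : ℕ))

end Chiral

end
end
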